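/- arXiv:2509.00165 — 8 statements merged into one kernel-verified Lean document; each statement's English description precedes it below -/
import Mathlib

section
/- Let n ≥ 1, a ∈ ℝ^n, and let B ∈ ℝ^{n×n} be invertible. If every entry of the vector x⋆ = B⁻¹·a is positive and the matrix −diag(x⋆)·B is Hurwitz-stable, then det(B) > 0. -/
open Polynomial Matrix Filter

/-- A real square matrix is Hurwitz-stable if every complex root of its characteristic
polynomial has negative real part. -/
def HurwitzStable {n : ℕ} (M : Matrix (Fin n) (Fin n) ℝ) : Prop :=
  ∀ z : ℂ, aeval z M.charpoly = 0 → z.re < 0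

/-- If `B` is invertible, every entry of `x⋆ = B⁻¹ · a` is positive, and
`-diag(x⋆) · B` is Hurwitz-stable, then `det B > 0`. -/
theorem feasible_stable_det_pos (n : ℕ) (hn : 1 ≤ n) (a : Fin n → ℝ)
    (B : Matrix (Fin n) (Fin n) ℝ) (hB : IsUnit B.det)
    (hfeas : ∀ i, 0 < B⁻¹.mulVec a i)
    (hstab : HurwitzStable (-(Matrix.diagonal (B⁻¹.mulVec a) * B))) :
    0 < B.det := by
  set x : Fin n → ℝ := B⁻¹.mulVec a with hx
  set M : Matrix (Fin n) (Fin n) ℝ := -(Matrix.diagonal x * B) with hM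
  set p : ℝ[X] := M.charpoly with hp
  have hmonic : p.Monic := Matrix.charpoly_monic M
  have hdeg : p.natDegree = n := by
    rw [hp, Matrix.charpoly_natDegree_eq_dim, Fintype.card_fin]
  -- no nonnegative real root
  have hnoroot : ∀ t : ℝ, 0 ≤ t → p.eval t ≠ 0 := by
    intro t ht h0
    have : (aeval (t : ℂ) p) = 0 := by
      rw [show ((t : ℂ)) = algebraMap ℝ ℂ t from rfl,
        aeval_algebraMap_apply_eq_algebraMap_eval, h0, map_zero]
    have := hstab _ this
    simp at this
    linarith
  -- p tends to +∞
  have htend : Tendsto (fun t => p.eval t) atTop atTop := by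
    apply Polynomial.tendsto_atTop_of_leadingCoeff_nonneg
    · rw [degree_eq_natDegree hmonic.ne_zero, hdeg]
      exact_mod_cast hn
    · rw [hmonic.leadingCoeff]; norm_num
  obtain ⟨T, hT0, hTpos⟩ : ∃ T : ℝ, 0 ≤ T ∧ 0 < p.eval T := by
    have := (htend.eventually (eventually_gt_atTop 0)).and (eventually_ge_atTop 0)
    obtain ⟨T, h1, h2⟩ := this.exists
    exact ⟨T, h2, h1⟩
  have heval0 : 0 < p.eval 0 := by
    rcases lt_trichotomy (p.eval 0) 0 with h | h | h
    · exfalso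
      have hc : Set.Icc (p.eval 0) (p.eval T) ⊆ (fun t => p.eval t) '' Set.Icc 0 T :=
        intermediate_value_Icc hT0 (Polynomial.continuous p).continuousOn
      obtain ⟨c, hc1, hc2⟩ := hc ⟨le_of_lt h, le_of_lt hTpos⟩
      exact hnoroot c hc1.1 hc2
    · exact absurd h (hnoroot 0 le_rfl)
    · exact h
  have hcoeff : 0 < p.coeff 0 := by rwa [coeff_zero_eq_eval_zero]
  have hdetM : M.det = (-1) ^ n * p.coeff 0 := by
    simpa using Matrix.det_eq_sign_charpoly_coeff M
  have hdetD : 0 < (Matrix.diagonal x).det := by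
    rw [Matrix.det_diagonal]
    exact Finset.prod_pos fun i _ => hfeas i
  have hdetM' : M.det = (-1) ^ n * ((Matrix.diagonal x).det * B.det) := by
    rw [hM, Matrix.det_neg, Matrix.det_mul]
    simp
  have key : (Matrix.diagonal x).det * B.det = p.coeff 0 := by
    have hne : ((-1 : ℝ) ^ n) ≠ 0 := by positivity
    exact mul_left_cancel₀ hne (hdetM'.symm.trans hdetM)
  nlinarith [hdetD, hcoeff, key]
end

section
/- Let n ≥ 1, a ∈ ℝ^n, B ∈ ℝ^{n×n}, and M = [diag(a)|B] ∈ ℝ^{n×2n}. Then for every i ∈ {1,…,n}, (adj(B)·a)_i = (−1)^{i+1} · Σ_{j=1}^n p_{(j, S_i)}(M), where (j, S_i) is the ordered list consisting of j followed by the elements of {n+1,…,2n}∖{n+i} in increasing order, and adj(B) denotes the adjugate matrix of B. -/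
open Matrix

noncomputable section

/-- The `n × 2n` block matrix `[diag(a) | B]`. -/
def blockMat {n : ℕ} (a : Fin n → ℝ) (B : Matrix (Fin n) (Fin n) ℝ) :
    Matrix (Fin n) (Fin (2 * n)) ℝ := fun i j =>
  if h : (j : ℕ) < n then (if (j : ℕ) = (i : ℕ) then a i else 0)
  else B i ⟨(j : ℕ) - n, by have := j.isLt; omega⟩

/-- For an ordered list `L` of column indices, `colMinor N L` is the determinant of the
`n × n` matrix whose `k`-th column is the `L k`-th column of `N`. -/
def colMinor {n : ℕ} (N : Matrix (Fin n) (Fin (2 * n)) ℝ) (L : Fin n → Fin (2 * n)) : ℝ :=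
  (N.submatrix id L).det

/-- The ordered list `(j, S_i)` (0-based): the column `j` of the first block, followed by
the columns `{n, …, 2n-1} \ {n+i}` in increasing order. -/
def listJS (n : ℕ) (i j : Fin n) : Fin n → Fin (2 * n) := fun k =>
  if (k : ℕ) = 0 then ⟨(j : ℕ), by have := j.isLt; omega⟩
  else if (k : ℕ) - 1 < (i : ℕ) then ⟨n + ((k : ℕ) - 1), by have := k.isLt; omega⟩
  else ⟨n + (k : ℕ), by have := k.isLt; omega⟩

section blockMat

variable {n : ℕ} (a : Fin n → ℝ) (B : Matrix (Fin n) (Fin n) ℝ)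

theorem blockMat_apply_castAdd (r c : Fin n) :
    blockMat a B r (Fin.cast (two_mul n).symm (Fin.castAdd n c)) = diagonal a r c := by
  simp [blockMat, diagonal_apply, Fin.ext_iff, eq_comm]

theorem blockMat_apply_natAdd (r c : Fin n) :
    blockMat a B r (Fin.cast (two_mul n).symm (Fin.natAdd n c)) = B r c := by
  simp [blockMat]

end blockMat

section listJS

variable {m : ℕ} (i j : Fin (m + 1))

theorem listJS_zero : listJS (m + 1) i j 0 = Fin.cast (two_mul _).symm (Fin.castAdd _ j) := by
  simp [listJS, Fin.ext_iff]

theorem listJS_succ (k : Fin m) :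
    listJS (m + 1) i j k.succ = Fin.cast (two_mul _).symm (Fin.natAdd _ (i.succAbove k)) := by
  rcases lt_or_ge (k : ℕ) i with h | h
  · rw [Fin.succAbove_of_castSucc_lt _ _ (by simpa [Fin.lt_def] using h)]
    simp [listJS, Fin.ext_iff, h, add_comm]
  · rw [Fin.succAbove_of_le_castSucc _ _ (by simpa [Fin.le_def] using h)]
    simp [listJS, Fin.ext_iff, Nat.not_lt.mpr h]
    omega

end listJS

/-- Expanding along the first column, which is `a j` times the `j`-th unit vector. -/
theorem colMinor_blockMat_listJS {m : ℕ} (a : Fin (m + 1) → ℝ)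
    (B : Matrix (Fin (m + 1)) (Fin (m + 1)) ℝ) (i j : Fin (m + 1)) :
    colMinor (blockMat a B) (listJS (m + 1) i j) =
      (-1) ^ (j : ℕ) * a j * (B.submatrix j.succAbove i.succAbove).det := by
  rw [colMinor, det_succ_column_zero, Fintype.sum_eq_single j]
  · have hcols : (blockMat a B).submatrix j.succAbove (listJS (m + 1) i j ∘ Fin.succ) =
        B.submatrix j.succAbove i.succAbove := by
      ext r k
      simp only [submatrix_apply, Function.comp_apply, listJS_succ, blockMat_apply_natAdd]
    simp [listJS_zero, blockMat_apply_castAdd, hcols]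
  · intro r hr
    simp [listJS_zero, blockMat_apply_castAdd, diagonal_apply_ne _ hr]

theorem adjugate_mulVec_eq_sum_minors_general (n : ℕ) (a : Fin n → ℝ)
    (B : Matrix (Fin n) (Fin n) ℝ) :
    ∀ i : Fin n,
      B.adjugate.mulVec a i =
        (-1 : ℝ) ^ (i : ℕ) * ∑ j : Fin n, colMinor (blockMat a B) (listJS n i j) := by
  intro i
  cases n with
  | zero => exact i.elim0
  | succ m =>
    rw [mulVec, dotProduct, Finset.mul_sum]
    refine Finset.sum_congr rfl fun j _ => ?_
    rw [colMinor_blockMat_listJS, adjugate_fin_succ_eq_det_submatrix, pow_add]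
    ring

/-- Each entry of `adj(B) · a` is a signed sum of maximal minors of `M = [diag(a) | B]`:
`(adj(B)·a)_i = (-1)^{i+1} Σ_j p_{(j, S_i)}(M)` (here stated 0-based, so the sign is
`(-1)^i`). -/
theorem adjugate_mulVec_eq_sum_minors (n : ℕ) (hn : 1 ≤ n) (a : Fin n → ℝ)
    (B : Matrix (Fin n) (Fin n) ℝ) :
    ∀ i : Fin n,
      B.adjugate.mulVec a i =
        (-1 : ℝ) ^ (i : ℕ) * ∑ j : Fin n, colMinor (blockMat a B) (listJS n i j) :=
  adjugate_mulVec_eq_sum_minors_general n a B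

end
end

section
/- Let n ≥ 1, a ∈ ℝ^n, B ∈ ℝ^{n×n}, and M = [diag(a)|B] ∈ ℝ^{n×2n}. Then for every subset I ⊆ {1,…,n}, p_{(I^c, n+I)}(M) = (−1)^{π(I)} · (∏_{j∈I^c} a_j) · det(B_{I,I}), where B_{I,I} is the principal submatrix of B with rows and columns indexed by I. -/
open Matrix

noncomputable section

/-- The ordered list `(I^c, n + I)`: the elements of `I^c ⊆ {0,…,n-1}` in increasing
order, followed by `n + s` for `s ∈ I` in increasing order. -/
def listPair {n : ℕ} (I : Finset (Fin n)) : Fin n → Fin (2 * n) := fun k =>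
  if h : (k : ℕ) < Iᶜ.card then
    Fin.castLE (by omega) (Iᶜ.orderEmbOfFin rfl ⟨(k : ℕ), h⟩)
  else
    Fin.cast (by omega)
      (Fin.natAdd n (I.orderEmbOfFin rfl ⟨(k : ℕ) - Iᶜ.card, by
        have h1 : Iᶜ.card = n - I.card := by simp [Finset.card_compl]
        have h2 : I.card ≤ n := by simpa using Finset.card_le_univ I
        have := k.isLt
        omega⟩))

/-- `π(I)`: the number of pairs `(r, s) ∈ I^c × I` with `s < r`. -/
def inversions {n : ℕ} (I : Finset (Fin n)) : ℕ :=
  ((Iᶜ ×ˢ I).filter fun p => p.2 < p.1).card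

lemma mySignAux_eq_sign {N : ℕ} (f : Equiv.Perm (Fin N)) :
    Equiv.Perm.signAux f = Equiv.Perm.sign f := by
  refine Equiv.Perm.swap_induction_on f (by simp) fun f x y hxy ih => ?_
  rw [Equiv.Perm.signAux_mul, Equiv.Perm.signAux_swap hxy, Equiv.Perm.sign_mul,
    Equiv.Perm.sign_swap hxy, ih]

lemma mySign_eq_pow {N : ℕ} (f : Equiv.Perm (Fin N)) :
    (Equiv.Perm.sign f : ℤˣ) =
      (-1 : ℤˣ) ^ ((Equiv.Perm.finPairsLT N).filter fun x => f x.1 ≤ f x.2).card := by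
  rw [← mySignAux_eq_sign]
  unfold Equiv.Perm.signAux
  rw [Finset.prod_ite, Finset.prod_const, Finset.prod_const, one_pow, mul_one]

/-- The maximal minor of `M = [diag(a) | B]` on the columns `(I^c, n + I)` equals
`(-1)^{π(I)} · (∏_{j ∈ I^c} a_j) · det(B_{I,I})`. -/
theorem minor_eq_sign_prod_principal (n : ℕ) (hn : 1 ≤ n) (a : Fin n → ℝ)
    (B : Matrix (Fin n) (Fin n) ℝ) :
    ∀ I : Finset (Fin n),
      colMinor (blockMat a B) (listPair I) =
        (-1 : ℝ) ^ inversions I * (∏ j ∈ Iᶜ, a j) *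
          (B.submatrix (fun k : Fin I.card => I.orderEmbOfFin rfl k)
            (fun k : Fin I.card => I.orderEmbOfFin rfl k)).det := by
  intro I
  classical
  have hcc : I.card + Iᶜ.card = n := by
    simpa using I.card_add_card_compl
  have hmp : Iᶜ.card + I.card = n := by omega
  have hpm : ∀ k : Fin n, ¬ (k : ℕ) < Iᶜ.card → (k : ℕ) - Iᶜ.card < I.card := by
    intro k h; have := k.isLt; omega
  -- the riffle permutation
  set f : Fin n → Fin n := fun k =>
    if h : (k : ℕ) < Iᶜ.card then Iᶜ.orderEmbOfFin rfl ⟨(k : ℕ), h⟩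
    else I.orderEmbOfFin rfl ⟨(k : ℕ) - Iᶜ.card, hpm k h⟩ with hfdef
  have hf1 : ∀ (k : Fin n) (h : (k : ℕ) < Iᶜ.card),
      f k = Iᶜ.orderEmbOfFin rfl ⟨(k : ℕ), h⟩ := fun k h => dif_pos h
  have hf2 : ∀ (k : Fin n) (h : ¬ (k : ℕ) < Iᶜ.card),
      f k = I.orderEmbOfFin rfl ⟨(k : ℕ) - Iᶜ.card, hpm k h⟩ := fun k h => dif_neg h
  have hfmem1 : ∀ (k : Fin n), (k : ℕ) < Iᶜ.card → f k ∈ Iᶜ := by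
    intro k h; rw [hf1 k h]; exact Finset.orderEmbOfFin_mem _ _ _
  have hfmem2 : ∀ (k : Fin n), ¬ (k : ℕ) < Iᶜ.card → f k ∈ I := by
    intro k h; rw [hf2 k h]; exact Finset.orderEmbOfFin_mem _ _ _
  have hfinj : Function.Injective f := by
    intro k1 k2 he
    by_cases h1 : (k1 : ℕ) < Iᶜ.card <;> by_cases h2 : (k2 : ℕ) < Iᶜ.card
    · rw [hf1 k1 h1, hf1 k2 h2] at he
      have := congrArg Fin.val ((Iᶜ.orderEmbOfFin rfl).injective he)
      exact Fin.ext this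
    · exact absurd (hfmem1 k1 h1) (by rw [he]; simpa using hfmem2 k2 h2)
    · exact absurd (hfmem1 k2 h2) (by rw [← he]; simpa using hfmem2 k1 h1)
    · rw [hf2 k1 h1, hf2 k2 h2] at he
      have := congrArg Fin.val ((I.orderEmbOfFin rfl).injective he)
      simp only at this
      exact Fin.ext (by omega)
  set σ : Equiv.Perm (Fin n) :=
    Equiv.ofBijective f (Finite.injective_iff_bijective.mp hfinj) with hσdef
  have hσ : ∀ k, σ k = f k := fun k => rfl
  -- the reindexing equivalence
  set E : Fin Iᶜ.card ⊕ Fin I.card ≃ Fin n := finSumFinEquiv.trans (finCongr hmp)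
    with hEdef
  have hEl : ∀ k : Fin Iᶜ.card, ((E (Sum.inl k) : Fin n) : ℕ) = (k : ℕ) := by
    intro k; simp [hEdef]
  have hEr : ∀ k : Fin I.card, ((E (Sum.inr k) : Fin n) : ℕ) = Iᶜ.card + (k : ℕ) := by
    intro k; simp [hEdef]
  have hσl : ∀ k : Fin Iᶜ.card, σ (E (Sum.inl k)) = Iᶜ.orderEmbOfFin rfl k := by
    intro k
    rw [hσ, hf1 _ (by rw [hEl]; exact k.isLt)]
    exact congrArg _ (Fin.ext (hEl k))
  have hσr : ∀ k : Fin I.card, σ (E (Sum.inr k)) = I.orderEmbOfFin rfl k := by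
    intro k
    rw [hσ, hf2 _ (by rw [hEr]; omega)]
    congr 1
    exact Fin.ext (show ((E (Sum.inr k) : Fin n) : ℕ) - Iᶜ.card = (k : ℕ) by
      have := hEr k; omega)
  have hLl : ∀ k : Fin Iᶜ.card,
      ((listPair I (E (Sum.inl k)) : Fin (2 * n)) : ℕ) = ((Iᶜ.orderEmbOfFin rfl k : Fin n) : ℕ) := by
    intro k
    have h : ((E (Sum.inl k) : Fin n) : ℕ) < Iᶜ.card := by rw [hEl]; exact k.isLt
    simp only [listPair, dif_pos h, Fin.coe_castLE]
    exact congrArg (fun t : Fin Iᶜ.card => ((Iᶜ.orderEmbOfFin rfl t : Fin n) : ℕ)) (Fin.ext (hEl k))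
  have hLr : ∀ k : Fin I.card,
      ((listPair I (E (Sum.inr k)) : Fin (2 * n)) : ℕ) = n + ((I.orderEmbOfFin rfl k : Fin n) : ℕ) := by
    intro k
    have h : ¬ ((E (Sum.inr k) : Fin n) : ℕ) < Iᶜ.card := by rw [hEr]; omega
    simp only [listPair, dif_neg h, Fin.coe_cast, Fin.coe_natAdd]
    congr 3
    exact Fin.ext (show ((E (Sum.inr k) : Fin n) : ℕ) - Iᶜ.card = (k : ℕ) by
      have := hEr k; omega)
  have hBM1 : ∀ (r : Fin n) (j : Fin (2 * n)) (h : (j : ℕ) < n),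
      blockMat a B r j = if (j : ℕ) = (r : ℕ) then a r else 0 := fun r j h => dif_pos h
  have hBM2 : ∀ (r : Fin n) (j : Fin (2 * n)) (h : ¬ (j : ℕ) < n),
      blockMat a B r j = B r ⟨(j : ℕ) - n, by have := j.isLt; omega⟩ := fun r j h => dif_neg h
  -- block decomposition
  set D : Matrix (Fin n) (Fin n) ℝ := (blockMat a B).submatrix σ (listPair I) with hDdef
  have hblocks : D.submatrix E E =
      Matrix.fromBlocks
        (Matrix.diagonal fun k : Fin Iᶜ.card => a (Iᶜ.orderEmbOfFin rfl k))
        (Matrix.of fun k k' => B (Iᶜ.orderEmbOfFin rfl k) (I.orderEmbOfFin rfl k'))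
        0
        (B.submatrix (fun k : Fin I.card => I.orderEmbOfFin rfl k)
          (fun k : Fin I.card => I.orderEmbOfFin rfl k)) := by
    ext i j
    cases i with
    | inl k =>
      cases j with
      | inl k' =>
        show blockMat a B (σ (E (Sum.inl k))) (listPair I (E (Sum.inl k'))) = _
        rw [hBM1 _ _ (by rw [hLl]; exact (Iᶜ.orderEmbOfFin rfl k').isLt), hLl, hσl]
        by_cases hkk : k' = k
        · subst hkk; simp [Matrix.diagonal]
        · have hne : ((Iᶜ.orderEmbOfFin rfl k' : Fin n) : ℕ) ≠ ((Iᶜ.orderEmbOfFin rfl k : Fin n) : ℕ) := by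
            intro hc
            exact hkk ((Iᶜ.orderEmbOfFin rfl).injective (Fin.ext hc))
          simp [Matrix.diagonal, hne, Ne.symm hkk]
      | inr k' =>
        show blockMat a B (σ (E (Sum.inl k))) (listPair I (E (Sum.inr k'))) = _
        rw [hBM2 _ _ (by rw [hLr]; omega), hσl]
        show B _ _ = B _ _
        congr 1
        exact Fin.ext (by simp [hLr])
    | inr k =>
      cases j with
      | inl k' =>
        show blockMat a B (σ (E (Sum.inr k))) (listPair I (E (Sum.inl k'))) = _
        rw [hBM1 _ _ (by rw [hLl]; exact (Iᶜ.orderEmbOfFin rfl k').isLt), hLl, hσr]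
        have hne : ((Iᶜ.orderEmbOfFin rfl k' : Fin n) : ℕ) ≠ ((I.orderEmbOfFin rfl k : Fin n) : ℕ) := by
          intro hc
          have h1 : (Iᶜ.orderEmbOfFin rfl k' : Fin n) ∈ Iᶜ := Finset.orderEmbOfFin_mem _ _ _
          have h2 : (I.orderEmbOfFin rfl k : Fin n) ∈ I := Finset.orderEmbOfFin_mem _ _ _
          rw [Fin.ext hc] at h1
          exact (Finset.mem_compl.mp h1) h2
        simp [hne]
      | inr k' =>
        show blockMat a B (σ (E (Sum.inr k))) (listPair I (E (Sum.inr k'))) = _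
        rw [hBM2 _ _ (by rw [hLr]; omega), hσr]
        show B _ _ = B _ _
        congr 1
        exact Fin.ext (by simp [hLr])
  -- determinant computation
  have hdetD : D.det = (∏ j ∈ Iᶜ, a j) *
      (B.submatrix (fun k : Fin I.card => I.orderEmbOfFin rfl k)
        (fun k : Fin I.card => I.orderEmbOfFin rfl k)).det := by
    rw [← Matrix.det_submatrix_equiv_self E D, hblocks, Matrix.det_fromBlocks_zero₂₁,
      Matrix.det_diagonal]
    congr 1
    refine Finset.prod_nbij (fun k => Iᶜ.orderEmbOfFin rfl k) ?_ ?_ ?_ ?_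
    · intro k _; exact Finset.orderEmbOfFin_mem _ _ _
    · intro k1 _ k2 _ h; exact (Iᶜ.orderEmbOfFin rfl).injective h
    · intro x hx
      have : x ∈ Set.range (Iᶜ.orderEmbOfFin rfl) := by
        rw [Finset.range_orderEmbOfFin]; exact hx
      obtain ⟨k, hk⟩ := this
      exact ⟨k, by simp, hk⟩
    · intro k _; rfl
  have hdetC : (blockMat a B).submatrix id (listPair I) =
      D.submatrix σ.symm id := by
    ext i j
    simp [hDdef, Matrix.submatrix_apply]
  -- sign computation
  have hsign : (Equiv.Perm.sign σ : ℤˣ) = (-1 : ℤˣ) ^ inversions I := by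
    rw [mySign_eq_pow]
    congr 1
    unfold inversions
    refine Finset.card_bij (fun x _ => (σ x.2, σ x.1)) ?_ ?_ ?_
    · rintro ⟨x1, x2⟩ hx
      simp only [Finset.mem_filter, Equiv.Perm.mem_finPairsLT] at hx
      obtain ⟨hlt, hle⟩ := hx
      have hne : x1 ≠ x2 := fun h => absurd (h ▸ hlt) (lt_irrefl _)
      have hslt : σ x1 < σ x2 := lt_of_le_of_ne hle (fun h => hne (σ.injective h))
      -- x2 must be in the first block and x1 in the second
      have hx2 : (x2 : ℕ) < Iᶜ.card := by
        by_contra h2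
        by_cases h1 : (x1 : ℕ) < Iᶜ.card
        · exact absurd (Fin.lt_iff_val_lt_val.mp hlt) (by omega)
        · rw [hσ, hσ, hf2 x1 h1, hf2 x2 h2] at hslt
          have := (I.orderEmbOfFin rfl).strictMono.lt_iff_lt.mp hslt
          have : (x1 : ℕ) - Iᶜ.card < (x2 : ℕ) - Iᶜ.card := this
          have hl := Fin.lt_iff_val_lt_val.mp hlt
          omega
      have hx1 : ¬ (x1 : ℕ) < Iᶜ.card := by
        intro h1
        rw [hσ, hσ, hf1 x1 h1, hf1 x2 hx2] at hslt
        have := (Iᶜ.orderEmbOfFin rfl).strictMono.lt_iff_lt.mp hslt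
        have : (x1 : ℕ) < (x2 : ℕ) := this
        have hl := Fin.lt_iff_val_lt_val.mp hlt
        omega
      simp only [Finset.mem_filter, Finset.mem_product]
      refine ⟨⟨?_, ?_⟩, hslt⟩
      · rw [hσ]; exact hfmem1 x2 hx2
      · rw [hσ]; exact hfmem2 x1 hx1
    · rintro ⟨x1, x2⟩ hx ⟨y1, y2⟩ hy h
      simp only [Prod.mk.injEq] at h
      have h2 := σ.injective h.1
      have h1 := σ.injective h.2
      subst h1; subst h2; rfl
    · rintro ⟨r, s⟩ hb
      simp only [Finset.mem_filter, Finset.mem_product] at hb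
      obtain ⟨⟨hr, hs⟩, hsr⟩ := hb
      refine ⟨⟨σ.symm s, σ.symm r⟩, ?_, by simp⟩
      simp only [Finset.mem_filter, Equiv.Perm.mem_finPairsLT]
      have hrv : σ (σ.symm r) = r := σ.apply_symm_apply r
      have hsv : σ (σ.symm s) = s := σ.apply_symm_apply s
      have hr2 : ((σ.symm r : Fin n) : ℕ) < Iᶜ.card := by
        by_contra h
        have := hfmem2 _ h
        rw [← hσ, hrv] at this
        exact (Finset.mem_compl.mp hr) this
      have hs1 : ¬ ((σ.symm s : Fin n) : ℕ) < Iᶜ.card := by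
        intro h
        have := hfmem1 _ h
        rw [← hσ, hsv] at this
        exact (Finset.mem_compl.mp this) hs
      constructor
      · exact Fin.lt_iff_val_lt_val.mpr (by omega)
      · rw [hrv, hsv]; exact le_of_lt hsr
  -- put everything together
  have hdetperm := Matrix.det_permute σ.symm D
  have hD2 : (D.submatrix σ.symm id) = (fun i => D (σ.symm i)) := rfl
  have hss : Equiv.Perm.sign σ.symm = Equiv.Perm.sign σ := Equiv.Perm.sign_symm σ
  unfold colMinor
  rw [hdetC]
  have : (D.submatrix σ.symm id).det = ((Equiv.Perm.sign σ : ℤ) : ℝ) * D.det := by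
    rw [Matrix.det_permute σ.symm D, hss]
  rw [this, hdetD, hsign]
  push_cast
  ring

end
end

section
/- Let B = (b_{ij}) ∈ ℝ^{3×3} satisfy b_{ii} > 0 for all i and b_{ij} < 0 for all i ≠ j, and let a ∈ ℝ^3 satisfy a_i < 0 for all i. If every entry of adj(B)·a is positive, then every 2×2 principal minor of B is negative, that is, b_{ii}b_{jj} − b_{ij}b_{ji} < 0 for all i ≠ j. -/
open Matrix

/-- For a `3 × 3` obligate-mutualism interaction matrix (`b_{ii} > 0`, `b_{ij} < 0` for
`i ≠ j`) and negative growth rates, feasibility (`adj(B)·a > 0`) forces all `2 × 2`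
principal minors of `B` to be negative. -/
theorem feasibility_forces_negative_principal_minors
    (B : Matrix (Fin 3) (Fin 3) ℝ) (a : Fin 3 → ℝ)
    (hBd : ∀ i, 0 < B i i) (hBo : ∀ i j, i ≠ j → B i j < 0)
    (ha : ∀ i, a i < 0)
    (hfeas : ∀ i, 0 < B.adjugate.mulVec a i) :
    ∀ i j, i ≠ j → B i i * B j j - B i j * B j i < 0 := by
  have h0 := hfeas 0; have h1 := hfeas 1; have h2 := hfeas 2
  simp [Matrix.adjugate_fin_three, Matrix.mulVec, dotProduct,
    Fin.sum_univ_three] at h0 h1 h2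
  have b01 := hBo 0 1 (by decide); have b02 := hBo 0 2 (by decide)
  have b10 := hBo 1 0 (by decide); have b12 := hBo 1 2 (by decide)
  have b20 := hBo 2 0 (by decide); have b21 := hBo 2 1 (by decide)
  have d0 := hBd 0; have d1 := hBd 1; have d2 := hBd 2
  -- principal minor (1,2): from h0
  have A0 : (-(B 0 1 * B 2 2) + B 0 2 * B 2 1) * a 1 < 0 := by
    have p := mul_pos_of_neg_of_neg b02 b21
    have q := mul_neg_of_neg_of_pos b01 d2
    exact mul_neg_of_pos_of_neg (by linarith) (ha 1)
  have A1 : (B 0 1 * B 1 2 - B 0 2 * B 1 1) * a 2 < 0 := by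
    have p := mul_pos_of_neg_of_neg b01 b12
    have q := mul_neg_of_neg_of_pos b02 d1
    exact mul_neg_of_pos_of_neg (by linarith) (ha 2)
  have hD12 : B 1 1 * B 2 2 - B 1 2 * B 2 1 < 0 :=
    neg_of_mul_pos_left (by linarith) (le_of_lt (ha 0))
  -- principal minor (0,2): from h1
  have B0 : (-(B 1 0 * B 2 2) + B 1 2 * B 2 0) * a 0 < 0 := by
    have p := mul_pos_of_neg_of_neg b12 b20
    have q := mul_neg_of_neg_of_pos b10 d2
    exact mul_neg_of_pos_of_neg (by linarith) (ha 0)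
  have B1 : (-(B 0 0 * B 1 2) + B 0 2 * B 1 0) * a 2 < 0 := by
    have p := mul_pos_of_neg_of_neg b02 b10
    have q := mul_neg_of_pos_of_neg d0 b12
    exact mul_neg_of_pos_of_neg (by linarith) (ha 2)
  have hD02 : B 0 0 * B 2 2 - B 0 2 * B 2 0 < 0 :=
    neg_of_mul_pos_left (by linarith) (le_of_lt (ha 1))
  -- principal minor (0,1): from h2
  have C0 : (B 1 0 * B 2 1 - B 1 1 * B 2 0) * a 0 < 0 := by
    have p := mul_pos_of_neg_of_neg b10 b21
    have q := mul_neg_of_pos_of_neg d1 b20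
    exact mul_neg_of_pos_of_neg (by linarith) (ha 0)
  have C1 : (-(B 0 0 * B 2 1) + B 0 1 * B 2 0) * a 1 < 0 := by
    have p := mul_pos_of_neg_of_neg b01 b20
    have q := mul_neg_of_pos_of_neg d0 b21
    exact mul_neg_of_pos_of_neg (by linarith) (ha 1)
  have hD01 : B 0 0 * B 1 1 - B 0 1 * B 1 0 < 0 :=
    neg_of_mul_pos_left (by linarith) (le_of_lt (ha 2))
  intro i j hij
  fin_cases i <;> fin_cases j <;> simp_all <;> nlinarith [hD01, hD02, hD12]
end

section
/- Let x ∈ ℝ^3 have all entries positive and let B = (b_{ij}) ∈ ℝ^{3×3} satisfy b_{ii}b_{jj} − b_{ij}b_{ji} < 0 for all i ≠ j. Then the matrix −diag(x)·B is not Hurwitz-stable, i.e., it has a complex eigenvalue with nonnegative real part. -/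
open Matrix Polynomial Filter

private lemma charpoly_fin3_aux (M : Matrix (Fin 3) (Fin 3) ℝ) :
    M.charpoly = X^3 - C (M 0 0 + M 1 1 + M 2 2) * X^2
      + C (M 0 0 * M 1 1 - M 0 1 * M 1 0 + M 0 0 * M 2 2 - M 0 2 * M 2 0
            + M 1 1 * M 2 2 - M 1 2 * M 2 1) * X
      - C (M 0 0 * M 1 1 * M 2 2 - M 0 0 * M 1 2 * M 2 1 - M 0 1 * M 1 0 * M 2 2
            + M 0 1 * M 1 2 * M 2 0 + M 0 2 * M 1 0 * M 2 1 - M 0 2 * M 1 1 * M 2 0) := by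
  rw [Matrix.charpoly, Matrix.det_fin_three]
  simp [charmatrix_apply_eq, charmatrix_apply_ne, Fin.ext_iff]
  ring

private lemma exists_real_root_cubic_aux (p : ℝ[X]) (hm : p.Monic) (hd : p.natDegree = 3) :
    ∃ r : ℝ, p.eval r = 0 := by
  have hdeg : (0:ℕ) < p.natDegree := by omega
  have hdeg' : 0 < p.degree := natDegree_pos_iff_degree_pos.mp hdeg
  have htop : Tendsto (fun x => p.eval x) atTop atTop :=
    p.tendsto_atTop_of_leadingCoeff_nonneg hdeg' (by simp [hm.leadingCoeff])
  set q : ℝ[X] := p.comp (-X) with hq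
  have hqd : q.natDegree = 3 := by rw [hq, natDegree_comp]; simp [hd]
  have hqlc : q.leadingCoeff = -1 := by
    rw [hq, leadingCoeff_comp (by simp)]
    simp [hm.leadingCoeff, hd, pow_succ]
  have hbot : Tendsto (fun x => q.eval x) atTop atBot :=
    q.tendsto_atBot_of_leadingCoeff_nonpos
      (natDegree_pos_iff_degree_pos.mp (by omega)) (by rw [hqlc]; norm_num)
  obtain ⟨a, ha⟩ := (htop.eventually_ge_atTop 1).exists
  obtain ⟨b, hb⟩ := (hbot.eventually_le_atBot (-1)).exists
  have hb' : p.eval (-b) ≤ -1 := by simpa [hq] using hb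
  have hc : ContinuousOn (fun x => p.eval x) (Set.uIcc (-b) a) := p.continuous.continuousOn
  have h0 : (0:ℝ) ∈ Set.uIcc (p.eval (-b)) (p.eval a) := by
    rw [Set.mem_uIcc]; left; constructor <;> linarith
  obtain ⟨r, _, hr⟩ := intermediate_value_uIcc hc h0
  exact ⟨r, hr⟩

private lemma coeff_one_pos_aux (p : ℝ[X]) (hm : p.Monic) (hd : p.natDegree = 3)
    (hroot : ∀ z : ℂ, (aeval z p = 0) → z.re < 0)
    (r : ℝ) (hr : p.eval r = 0) (hrneg : r < 0) : 0 < p.coeff 1 := by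
  set q : ℝ[X] := p /ₘ (X - C r) with hq
  have hfac : (X - C r) * q = p := mul_divByMonic_eq_iff_isRoot.mpr hr
  have hp0 : p ≠ 0 := hm.ne_zero
  have hq0 : q ≠ 0 := by
    intro h; rw [h, mul_zero] at hfac; exact hp0 hfac.symm
  have hqm : q.Monic := by
    have := hm
    rw [← hfac] at this
    have hlc : ((X - C r) * q).leadingCoeff = (X - C r).leadingCoeff * q.leadingCoeff :=
      leadingCoeff_mul _ _
    rw [Monic, hlc, leadingCoeff_X_sub_C, one_mul] at this
    exact this
  have hqd : q.natDegree = 2 := by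
    have := hd
    rw [← hfac, natDegree_mul (X_sub_C_ne_zero r) hq0, natDegree_X_sub_C] at this
    omega
  set s : ℝ := q.coeff 1 with hs
  set t : ℝ := q.coeff 0 with ht
  -- complex root of q
  have hqC : 0 < (q.map (algebraMap ℝ ℂ)).degree := by
    rw [degree_map, degree_eq_natDegree hq0, hqd]
    norm_num
  obtain ⟨w, hw⟩ := Complex.exists_root hqC
  -- w² + s w + t = 0
  have hweq : w^2 + (s:ℂ) * w + (t:ℂ) = 0 := by
    have := hw
    rw [IsRoot, eval_eq_sum_range, natDegree_map, hqd] at this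
    simp only [Finset.sum_range_succ, Finset.sum_range_zero, coeff_map,
      Complex.coe_algebraMap] at this
    have hc2 : q.coeff 2 = 1 := by
      have := hqm.coeff_natDegree; rwa [hqd] at this
    rw [hc2] at this
    rw [← hs, ← ht] at this
    push_cast at this
    linear_combination this
  -- w and w' = -s - w are roots of p over ℂ
  have hpc : ∀ z : ℂ, z^2 + (s:ℂ)*z + (t:ℂ) = 0 → aeval z p = 0 := by
    intro z hz
    rw [← hfac, _root_.map_mul]
    have hqz : aeval z q = 0 := by
      rw [aeval_def, eval₂_eq_eval_map, eval_eq_sum_range, natDegree_map, hqd]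
      simp only [Finset.sum_range_succ, Finset.sum_range_zero, coeff_map,
        Complex.coe_algebraMap]
      have hc2 : q.coeff 2 = 1 := by
        have := hqm.coeff_natDegree; rwa [hqd] at this
      rw [hc2, ← hs, ← ht]
      push_cast
      linear_combination hz
    rw [hqz, mul_zero]
  have hwroot : aeval w p = 0 := hpc w hweq
  have hw'root : aeval (-(s:ℂ) - w) p = 0 := by
    apply hpc
    linear_combination hweq
  have h1 : w.re < 0 := hroot w hwroot
  have h2 : (-(s:ℂ) - w).re < 0 := hroot _ hw'root
  have h2' : -s - w.re < 0 := by simpa using h2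
  -- t > 0
  have htpos : 0 < t := by
    have hret : (w^2 + (s:ℂ) * w + (t:ℂ)).re = 0 := by rw [hweq]; simp
    rw [pow_two] at hret
    simp only [Complex.add_re, Complex.mul_re, Complex.ofReal_re, Complex.ofReal_im] at hret
    nlinarith [sq_nonneg w.im, hret]
  have hspos : 0 < s := by linarith
  -- coeff 1 of p
  have hcoeff : p.coeff 1 = t - r * s := by
    rw [← hfac, sub_mul, coeff_sub, coeff_X_mul, coeff_C_mul]
  rw [hcoeff]
  nlinarith

/-- If `x ∈ ℝ³` has all positive entries and all `2 × 2` principal minors of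
`B ∈ ℝ^{3×3}` are negative, then `-diag(x)·B` is not Hurwitz-stable: its characteristic
polynomial has a complex root with nonnegative real part. -/
theorem negative_principal_minors_unstable
    (x : Fin 3 → ℝ) (hx : ∀ i, 0 < x i)
    (B : Matrix (Fin 3) (Fin 3) ℝ)
    (hB : ∀ i j, i ≠ j → B i i * B j j - B i j * B j i < 0) :
    ∃ z : ℂ, aeval z (-(Matrix.diagonal x * B)).charpoly = 0 ∧ 0 ≤ z.re := by
  by_contra hcon
  push_neg at hcon
  set A : Matrix (Fin 3) (Fin 3) ℝ := -(Matrix.diagonal x * B) with hA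
  set p : ℝ[X] := A.charpoly with hp
  have hroot : ∀ z : ℂ, (aeval z p = 0) → z.re < 0 := fun z hz => hcon z hz
  have hAe : ∀ i j, A i j = -(x i * B i j) := by
    intro i j; simp [hA, Matrix.diagonal_mul]
  have hm : p.Monic := A.charpoly_monic
  have hd : p.natDegree = 3 := by
    rw [hp, A.charpoly_natDegree_eq_dim]; simp
  have hc1 : p.coeff 1 < 0 := by
    rw [hp, charpoly_fin3_aux A]
    simp only [coeff_add, coeff_sub, coeff_C_mul, coeff_X_pow, coeff_X, coeff_C]
    norm_num
    rw [hAe 0 0, hAe 1 1, hAe 0 1, hAe 1 0, hAe 2 2, hAe 0 2, hAe 2 0, hAe 1 2, hAe 2 1]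
    have h01 := hB 0 1 (by decide)
    have h02 := hB 0 2 (by decide)
    have h12 := hB 1 2 (by decide)
    have p01 := mul_pos (hx 0) (hx 1)
    have p02 := mul_pos (hx 0) (hx 2)
    have p12 := mul_pos (hx 1) (hx 2)
    have e01 : -(x 0 * B 0 0) * -(x 1 * B 1 1) - -(x 0 * B 0 1) * -(x 1 * B 1 0)
        = x 0 * x 1 * (B 0 0 * B 1 1 - B 0 1 * B 1 0) := by ring
    have e02 : -(x 0 * B 0 0) * -(x 2 * B 2 2) - -(x 0 * B 0 2) * -(x 2 * B 2 0)
        = x 0 * x 2 * (B 0 0 * B 2 2 - B 0 2 * B 2 0) := by ring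
    have e12 : -(x 1 * B 1 1) * -(x 2 * B 2 2) - -(x 1 * B 1 2) * -(x 2 * B 2 1)
        = x 1 * x 2 * (B 1 1 * B 2 2 - B 1 2 * B 2 1) := by ring
    nlinarith [mul_neg_of_pos_of_neg p01 h01, mul_neg_of_pos_of_neg p02 h02,
      mul_neg_of_pos_of_neg p12 h12]
  obtain ⟨r, hr⟩ := exists_real_root_cubic_aux p hm hd
  have hrneg : r < 0 := by
    have hz : aeval (r : ℂ) p = 0 := by
      rw [show ((r:ℂ)) = (RCLike.ofReal r : ℂ) from rfl, aeval_ofReal, hr]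
      simp
    simpa using hroot (r : ℂ) hz
  have := coeff_one_pos_aux p hm hd hroot r hr hrneg
  linarith
end

section
/- There do not exist a ∈ ℝ^3 and B = (b_{ij}) ∈ ℝ^{3×3} with a_i < 0 for all i, b_{ii} > 0 for all i, and b_{ij} < 0 for all i ≠ j such that the pair (a,B) is feasible-stable. In other words, obligate mutualism of three species is an impossible ecology. -/
open Matrix Polynomial

/-- `(a, B)` is feasible-stable if every entry of `adj(B)·a` is positive and
`-diag(adj(B)·a)·B` is Hurwitz-stable. -/
def FeasibleStable {n : ℕ} (a : Fin n → ℝ) (B : Matrix (Fin n) (Fin n) ℝ) : Prop :=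
  (∀ i, 0 < B.adjugate.mulVec a i) ∧
    HurwitzStable (-(Matrix.diagonal (B.adjugate.mulVec a) * B))

lemma key3 (p1 p2 p3 q12 q13 q21 q23 q31 q32 : ℝ)
    (hq12 : 0 < q12) (hq13 : 0 < q13) (hq21 : 0 < q21) (hq23 : 0 < q23)
    (hq31 : 0 < q31) (hq32 : 0 < q32) (hp1 : 0 < p1) (hp2 : 0 < p2) (hp3 : 0 < p3)
    (h1 : p1 < q12 + q13) (h2 : p2 < q21 + q23) (h3 : p3 < q31 + q32) :
    p1*p2*p3 - p1*(q23*q32) - p2*(q13*q31) - p3*(q12*q21)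
      - q12*(q23*q31) - q13*(q21*q32) < 0 := by
  rcases le_or_gt (p2*p3) (q23*q32) with h | h
  · nlinarith [mul_pos hp2 (mul_pos hq13 hq31), mul_pos hp3 (mul_pos hq12 hq21),
      mul_pos hq12 (mul_pos hq23 hq31), mul_pos hq13 (mul_pos hq21 hq32),
      mul_nonneg hp1.le (sub_nonneg.2 h)]
  · have b1 : p2*p3 - q23*q32 - p3*q21 - q23*q31 < 0 := by
      nlinarith [mul_lt_mul_of_pos_right h2 hp3, mul_lt_mul_of_pos_left h3 hq23]
    have b2 : p2*p3 - q23*q32 - p2*q31 - q21*q32 < 0 := by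
      nlinarith [mul_lt_mul_of_pos_left h3 hp2, mul_lt_mul_of_pos_right h2 hq32]
    nlinarith [mul_pos (sub_pos.2 h1) (sub_pos.2 h),
      mul_neg_of_pos_of_neg hq12 b1, mul_neg_of_pos_of_neg hq13 b2,
      mul_lt_mul_of_pos_right h1 (sub_pos.2 h)]

lemma eval_zero_pos_of_hurwitz {n : ℕ} (hn : 0 < n) (M : Matrix (Fin n) (Fin n) ℝ)
    (hH : HurwitzStable M) : 0 < M.charpoly.eval 0 := by
  by_contra hle
  push_neg at hle
  have hmono : M.charpoly.Monic := M.charpoly_monic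
  have hdeg : M.charpoly.natDegree = n := by simpa using M.charpoly_natDegree_eq_dim
  have htop : Filter.Tendsto (fun r : ℝ => M.charpoly.eval r) Filter.atTop Filter.atTop := by
    apply Polynomial.tendsto_atTop_of_leadingCoeff_nonneg
    · rw [Polynomial.degree_eq_natDegree hmono.ne_zero, hdeg]
      exact_mod_cast hn
    · rw [hmono.leadingCoeff]; exact zero_le_one
  obtain ⟨b, hbpos, hb0⟩ :=
    ((htop.eventually_gt_atTop 0).and (Filter.eventually_ge_atTop (0:ℝ))).exists
  have hIcc : (0:ℝ) ∈ Set.Icc (M.charpoly.eval 0) (M.charpoly.eval b) := ⟨hle, hbpos.le⟩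
  obtain ⟨c, hc, hc0⟩ := intermediate_value_Icc hb0 (M.charpoly.continuous_aeval.continuousOn) hIcc
  have hz : (aeval (c:ℂ)) M.charpoly = 0 := by
    have hcc : ((c:ℂ)) = algebraMap ℝ ℂ c := rfl
    rw [hcc, aeval_algebraMap_apply]
    simpa using hc0
  have := hH _ hz
  simp only [Complex.ofReal_re] at this
  linarith [hc.1]

/-- **Obligate mutualism of three species is an impossible ecology.** -/
theorem obligate_mutualism_three_impossible :
    ¬ ∃ (a : Fin 3 → ℝ) (B : Matrix (Fin 3) (Fin 3) ℝ),
      (∀ i, a i < 0) ∧ (∀ i, 0 < B i i) ∧ (∀ i j, i ≠ j → B i j < 0) ∧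
      FeasibleStable a B := by
  rintro ⟨a, B, ha, hdiag, hoff, hfs⟩
  have hx : ∀ i, 0 < B.adjugate.mulVec a i := hfs.1
  have hH : HurwitzStable (-(Matrix.diagonal (B.adjugate.mulVec a) * B)) := hfs.2
  set x : Fin 3 → ℝ := B.adjugate.mulVec a with hxdef
  set M : Matrix (Fin 3) (Fin 3) ℝ := -(Matrix.diagonal x * B) with hM
  have h0 : 0 < M.charpoly.eval 0 := eval_zero_pos_of_hurwitz (by norm_num) M hH
  have hdetM : M.det < 0 := by
    have h1 := M.det_eq_sign_charpoly_coeff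
    rw [Polynomial.coeff_zero_eq_eval_zero] at h1
    simp only [Fintype.card_fin] at h1
    rw [h1]; nlinarith
  have hdetDB : 0 < ((Matrix.diagonal x) * B).det := by
    have h2 : M.det = - ((Matrix.diagonal x) * B).det := by
      rw [hM, Matrix.det_neg]; simp; ring
    linarith
  have hdetB : 0 < B.det := by
    rw [Matrix.det_mul, Matrix.det_diagonal, Fin.prod_univ_three] at hdetDB
    nlinarith [hx 0, hx 1, hx 2, mul_pos (mul_pos (hx 0) (hx 1)) (hx 2)]
  have hBx : B.mulVec x = B.det • a := by
    rw [hxdef, Matrix.mulVec_mulVec, Matrix.mul_adjugate, Matrix.smul_mulVec,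
      Matrix.one_mulVec]
  have hrow : ∀ i, B.mulVec x i < 0 := by
    intro i
    rw [hBx]
    exact mul_neg_of_pos_of_neg hdetB (ha i)
  have e0 : B 0 0 * x 0 + B 0 1 * x 1 + B 0 2 * x 2 < 0 := by
    have := hrow 0
    simpa [Matrix.mulVec, dotProduct, Fin.sum_univ_three] using this
  have e1 : B 1 0 * x 0 + B 1 1 * x 1 + B 1 2 * x 2 < 0 := by
    have := hrow 1
    simpa [Matrix.mulVec, dotProduct, Fin.sum_univ_three] using this
  have e2 : B 2 0 * x 0 + B 2 1 * x 1 + B 2 2 * x 2 < 0 := by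
    have := hrow 2
    simpa [Matrix.mulVec, dotProduct, Fin.sum_univ_three] using this
  have hQ : ∀ i j, i ≠ j → 0 < -(x i * B i j * x j) := by
    intro i j hij
    have := mul_neg_of_neg_of_pos (mul_neg_of_pos_of_neg (hx i) (hoff i j hij)) (hx j)
    linarith
  have k := key3 (x 0 * B 0 0 * x 0) (x 1 * B 1 1 * x 1) (x 2 * B 2 2 * x 2)
    (-(x 0 * B 0 1 * x 1)) (-(x 0 * B 0 2 * x 2)) (-(x 1 * B 1 0 * x 0))
    (-(x 1 * B 1 2 * x 2)) (-(x 2 * B 2 0 * x 0)) (-(x 2 * B 2 1 * x 1))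
    (hQ 0 1 (by decide)) (hQ 0 2 (by decide)) (hQ 1 0 (by decide)) (hQ 1 2 (by decide))
    (hQ 2 0 (by decide)) (hQ 2 1 (by decide))
    (mul_pos (mul_pos (hx 0) (hdiag 0)) (hx 0))
    (mul_pos (mul_pos (hx 1) (hdiag 1)) (hx 1))
    (mul_pos (mul_pos (hx 2) (hdiag 2)) (hx 2))
    (by nlinarith [mul_neg_of_pos_of_neg (hx 0) e0])
    (by nlinarith [mul_neg_of_pos_of_neg (hx 1) e1])
    (by nlinarith [mul_neg_of_pos_of_neg (hx 2) e2])
  have hfin : (x 0 * x 1 * x 2) ^ 2 * B.det < 0 := by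
    rw [Matrix.det_fin_three]
    nlinarith [k]
  have hpos : 0 < (x 0 * x 1 * x 2) ^ 2 * B.det :=
    mul_pos (pow_pos (mul_pos (mul_pos (hx 0) (hx 1)) (hx 2)) 2) hdetB
  linarith
end

section
/- There do not exist a ∈ ℝ^3 and B = (b_{ij}) ∈ ℝ^{3×3} with a_1 > 0, a_2 < 0, a_3 < 0, b_{11} > 0, b_{22} > 0, b_{33} > 0, b_{21} > 0, b_{31} > 0, b_{12} < 0, b_{13} < 0, b_{23} < 0, b_{32} < 0 such that the pair (a,B) is feasible-stable. In other words, facultative predation on two obligate mutualists is an impossible ecology for three species. -/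
open Matrix Polynomial

lemma hurwitz_det_neg (M : Matrix (Fin 3) (Fin 3) ℝ) (h : HurwitzStable M) :
    M.det < 0 := by
  set p := M.charpoly with hp
  have hmonic : p.Monic := M.charpoly_monic
  have hdeg : p.natDegree = 3 := by
    rw [hp, M.charpoly_natDegree_eq_dim]; simp
  have hnoroot : ∀ t : ℝ, 0 ≤ t → p.eval t ≠ 0 := by
    intro t ht hroot
    have : (aeval (t : ℂ)) p = 0 := by
      have h1 := Polynomial.aeval_algebraMap_apply ℂ t p
      simp only [Complex.coe_algebraMap] at h1
      rw [h1]
      have h2 : (aeval t) p = p.eval t := Polynomial.aeval_def t p ▸ rfl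
      rw [h2, hroot]
      simp
    have := h _ this
    simp at this
    linarith
  have htop : Filter.Tendsto (fun x => p.eval x) Filter.atTop Filter.atTop := by
    apply Polynomial.tendsto_atTop_of_leadingCoeff_nonneg
    · rw [degree_eq_natDegree hmonic.ne_zero, hdeg]; norm_num
    · rw [hmonic.leadingCoeff]; norm_num
  obtain ⟨T, hT⟩ := (htop.eventually_gt_atTop 0).exists_forall_of_atTop
  have hT0 : 0 < p.eval (max T 0) := hT _ (le_max_left _ _)
  have hpos0 : 0 < p.eval 0 := by
    rcases lt_trichotomy (p.eval 0) 0 with hneg | hzero | hpos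
    · have : (0:ℝ) ∈ Set.Icc (0:ℝ) (max T 0) := by simp
      obtain ⟨c, hc, hcr⟩ := intermediate_value_Icc (le_max_right T 0)
        (Polynomial.continuousOn _) (show (0:ℝ) ∈ Set.Icc (p.eval 0) (p.eval (max T 0)) by
          constructor <;> linarith)
      exact absurd hcr (hnoroot c hc.1)
    · exact absurd hzero (hnoroot 0 le_rfl)
    · exact hpos
  have hdet : M.det = (-1)^(3:ℕ) * p.coeff 0 := by
    rw [hp]
    have := Matrix.det_eq_sign_charpoly_coeff M
    simpa using this
  rw [hdet, Polynomial.coeff_zero_eq_eval_zero]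
  nlinarith

/-- **Facultative predation on two obligate mutualists is an impossible ecology**
for three species (here indices are 0-based: species `0,1,2` correspond to `1,2,3`). -/
theorem facultative_predation_on_mutualists_impossible :
    ¬ ∃ (a : Fin 3 → ℝ) (B : Matrix (Fin 3) (Fin 3) ℝ),
      0 < a 0 ∧ a 1 < 0 ∧ a 2 < 0 ∧
      0 < B 0 0 ∧ 0 < B 1 1 ∧ 0 < B 2 2 ∧
      0 < B 1 0 ∧ 0 < B 2 0 ∧
      B 0 1 < 0 ∧ B 0 2 < 0 ∧ B 1 2 < 0 ∧ B 2 1 < 0 ∧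
      FeasibleStable a B := by
  rintro ⟨a, B, ha0, ha1, ha2, hB00, hB11, hB22, hB10, hB20, hB01, hB02, hB12, hB21,
    hfeas, hstab⟩
  set d := B.adjugate.mulVec a with hd
  have hd0 := hfeas 0
  have hd1 := hfeas 1
  have hd2 := hfeas 2
  -- determinant of B is positive
  have hdetM := hurwitz_det_neg _ hstab
  have hdetM' : (-(Matrix.diagonal d * B)).det = -(d 0 * d 1 * d 2 * B.det) := by
    rw [Matrix.det_neg, Matrix.det_mul, Matrix.det_diagonal]
    simp [Fin.prod_univ_three]
    ring
  have hdetB : 0 < B.det := by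
    rw [hdetM'] at hdetM
    nlinarith [mul_pos (mul_pos hd0 hd1) hd2]
  -- B * d = det B • a
  have hBd : B.mulVec d = B.det • a := by
    rw [hd, Matrix.mulVec_mulVec, Matrix.mul_adjugate, Matrix.smul_mulVec,
      Matrix.one_mulVec]
  have hE1 : B 1 0 * d 0 + B 1 1 * d 1 + B 1 2 * d 2 = B.det * a 1 := by
    have := congrFun hBd 1
    simpa [Matrix.mulVec, dotProduct, Fin.sum_univ_three] using this
  have hE2 : B 2 0 * d 0 + B 2 1 * d 1 + B 2 2 * d 2 = B.det * a 2 := by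
    have := congrFun hBd 2
    simpa [Matrix.mulVec, dotProduct, Fin.sum_univ_three] using this
  -- cofactor (0,0) of B is positive
  have hd0' : d 0 = (B 1 1 * B 2 2 - B 1 2 * B 2 1) * a 0 +
      (B 0 2 * B 2 1 - B 0 1 * B 2 2) * a 1 + (B 0 1 * B 1 2 - B 0 2 * B 1 1) * a 2 := by
    rw [hd, Matrix.adjugate_fin_three]
    simp only [Matrix.mulVec, dotProduct, Fin.sum_univ_three, Matrix.of_apply,
      Matrix.cons_val', Matrix.cons_val_zero, Matrix.cons_val_one, Matrix.head_cons,
      Matrix.empty_val', Matrix.cons_val_fin_one, Matrix.head_fin_const, Matrix.cons_val_two,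
      Matrix.tail_cons]
    ring
  have h1 : 0 < B 0 2 * B 2 1 - B 0 1 * B 2 2 := by
    nlinarith [mul_pos_of_neg_of_neg hB02 hB21, mul_neg_of_neg_of_pos hB01 hB22]
  have h2 : 0 < B 0 1 * B 1 2 - B 0 2 * B 1 1 := by
    nlinarith [mul_pos_of_neg_of_neg hB01 hB12, mul_neg_of_neg_of_pos hB02 hB11]
  have hca : 0 < (B 1 1 * B 2 2 - B 1 2 * B 2 1) * a 0 := by
    linarith [mul_neg_of_pos_of_neg h1 ha1, mul_neg_of_pos_of_neg h2 ha2]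
  have hcof : 0 < B 1 1 * B 2 2 - B 1 2 * B 2 1 := by
    rcases mul_pos_iff.mp hca with ⟨h, _⟩ | ⟨_, h⟩
    · exact h
    · linarith
  -- contradiction
  have hA1 : B 1 0 * d 0 + B 1 1 * d 1 + B 1 2 * d 2 < 0 := by
    rw [hE1]; exact mul_neg_of_pos_of_neg hdetB ha1
  have hA2 : B 2 0 * d 0 + B 2 1 * d 1 + B 2 2 * d 2 < 0 := by
    rw [hE2]; exact mul_neg_of_pos_of_neg hdetB ha2
  clear hstab hBd hdetM hdetM' hfeas hd hd0' hE1 hE2 hca h1 h2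
  have key : (B 1 0 * B 2 2 - B 1 2 * B 2 0) * d 0 +
      (B 1 1 * B 2 2 - B 1 2 * B 2 1) * d 1 < 0 := by
    nlinarith [mul_lt_mul_of_pos_left hA1 hB22, mul_lt_mul_of_pos_left hA2 (neg_pos.mpr hB12)]
  nlinarith [mul_pos (mul_pos hB10 hB22) hd0, mul_pos (mul_pos hB20 (neg_pos.mpr hB12)) hd0,
    mul_pos hcof hd1]
end

section
/- There do not exist a ∈ ℝ^4 and B = (b_{ij}) ∈ ℝ^{4×4} with a_1 > 0, a_2 < 0, a_3 < 0, a_4 < 0, b_{ii} > 0 for all i, b_{1j} > 0 and b_{j1} > 0 for j ∈ {2,3,4}, and b_{jk} < 0 for all j ≠ k with j,k ∈ {2,3,4}, such that the pair (a,B) is feasible-stable. In other words, the four-species network in which one growing species competes with three dying species that are pairwise obligate mutualists is an impossible ecology. -/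
open Matrix Polynomial

open Set Filter

theorem Polynomial.Monic.eval_pos_of_forall_nonneg_not_isRoot {p : ℝ[X]} (hp : p.Monic)
    (h : ∀ t, 0 ≤ t → ¬ p.IsRoot t) {t : ℝ} (ht : 0 ≤ t) : 0 < p.eval t := by
  rcases eq_or_ne p.natDegree 0 with hdeg | hdeg
  · simp [hp.natDegree_eq_zero.mp hdeg]
  have htop : Tendsto (fun s => p.eval s) atTop atTop :=
    tendsto_atTop_of_leadingCoeff_nonneg _ (natDegree_pos_iff_degree_pos.mp (by omega))
      (by simp [hp.leadingCoeff])
  by_contra! hle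
  obtain ⟨s, hts, hs⟩ :=
    intermediate_value_Ici p.continuous.continuousOn htop (show p.eval t ≤ 0 from hle)
  exact h s (ht.trans hts) hs

namespace Matrix

section ZMatrix

variable {n : Type*} [Fintype n] {N : Matrix n n ℝ}

theorem mulVec_apply_nonpos_of_apply_eq_zero (hN : ∀ i j, i ≠ j → N i j ≤ 0)
    {z : n → ℝ} (hz : ∀ j, 0 ≤ z j) {i : n} (hzi : z i = 0) : (N *ᵥ z) i ≤ 0 := by
  refine Finset.sum_nonpos fun j _ => ?_
  rcases eq_or_ne i j with rfl | hij
  · simp [hzi]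
  · exact mul_nonpos_of_nonpos_of_nonneg (hN i j hij) (hz j)

theorem pos_of_nonneg_of_mulVec_pos (hN : ∀ i j, i ≠ j → N i j ≤ 0)
    {z : n → ℝ} (hz : ∀ j, 0 ≤ z j) (hNz : ∀ i, 0 < (N *ᵥ z) i) (i : n) : 0 < z i :=
  (hz i).lt_of_ne' fun hzi => (hNz i).not_ge (mulVec_apply_nonpos_of_apply_eq_zero hN hz hzi)

theorem nonneg_of_mulVec_nonneg (hN : ∀ i j, i ≠ j → N i j ≤ 0)
    {v : n → ℝ} (hv : ∀ i, 0 < v i) (hNv : ∀ i, 0 < (N *ᵥ v) i)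
    {y : n → ℝ} (hNy : ∀ i, 0 ≤ (N *ᵥ y) i) (i : n) : 0 ≤ y i := by
  by_contra! hyi
  obtain ⟨k, -, hk⟩ :=
    Finset.exists_min_image Finset.univ (fun j => y j / v j) ⟨i, Finset.mem_univ i⟩
  set r := y k / v k
  have hr : r < 0 := (hk i (Finset.mem_univ i)).trans_lt (div_neg_of_neg_of_pos hyi (hv i))
  have hz (j : n) : 0 ≤ (y - r • v) j := by
    have := hk j (Finset.mem_univ j)
    rw [le_div_iff₀ (hv j)] at this
    simp only [Pi.sub_apply, Pi.smul_apply, smul_eq_mul]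
    linarith
  have hzk : (y - r • v) k = 0 := by
    simp only [Pi.sub_apply, Pi.smul_apply, smul_eq_mul, r, div_mul_cancel₀ _ (hv k).ne', sub_self]
  have := mulVec_apply_nonpos_of_apply_eq_zero hN hz hzk
  rw [mulVec_sub, mulVec_smul, Pi.sub_apply, Pi.smul_apply, smul_eq_mul] at this
  nlinarith [hNy k, hNv k]

end ZMatrix

variable {n : Type*} [Fintype n] [DecidableEq n]

theorem eventually_mulVec_scalar_sub_pos (A : Matrix n n ℝ) {w : n → ℝ} (hw : ∀ i, 0 < w i) :
    ∀ᶠ T in atTop, ∀ i, 0 < ((scalar n T - A) *ᵥ w) i := by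
  refine eventually_all.mpr fun i => ?_
  filter_upwards [(tendsto_id.atTop_mul_const (hw i)).eventually_gt_atTop ((A *ᵥ w) i)] with T hT
  simpa [sub_mulVec, mul_comm] using hT

theorem exists_nonneg_isRoot_charpoly_of_mulVec_nonneg [Nonempty n] {A : Matrix n n ℝ}
    (hA : ∀ i j, i ≠ j → 0 ≤ A i j) {w : n → ℝ} (hw : ∀ i, 0 < w i)
    (hAw : ∀ i, 0 ≤ (A *ᵥ w) i) : ∃ t, 0 ≤ t ∧ A.charpoly.IsRoot t := by
  by_contra! hroot
  set N : ℝ → Matrix n n ℝ := fun t => scalar n t - A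
  have hNZ (t : ℝ) : ∀ i j, i ≠ j → N t i j ≤ 0 := fun i j hij => by
    simpa [N, hij] using hA i j hij
  set z : ℝ → n → ℝ := fun t => (N t).adjugate *ᵥ w
  have hz : Continuous z := by
    simp only [z, N, scalar_apply]
    fun_prop
  have hNz {t : ℝ} (ht : 0 ≤ t) (i : n) : 0 < (N t *ᵥ z t) i := by
    have hdet : 0 < (N t).det := by
      rw [← eval_charpoly]
      exact A.charpoly_monic.eval_pos_of_forall_nonneg_not_isRoot hroot ht
    simpa [z, mulVec_mulVec, mul_adjugate, smul_mulVec, one_mulVec] using mul_pos hdet (hw i)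
  set U := {t | ∀ i, 0 < z t i}
  have hU : IsOpen U := by
    simp only [U, ofPred_forall]
    exact isOpen_iInter_of_finite fun i =>
      isOpen_lt continuous_const ((continuous_apply i).comp hz)
  have hmemU {t : ℝ} (ht : 0 ≤ t) (hzt : ∀ i, 0 ≤ z t i) : t ∈ U :=
    pos_of_nonneg_of_mulVec_pos (hNZ t) hzt (hNz ht)
  obtain ⟨T, hTw, hT0⟩ :=
    ((A.eventually_mulVec_scalar_sub_pos hw).and (eventually_ge_atTop 0)).exists
  have hsub : Ici 0 ⊆ U := by
    refine isPreconnected_Ici.subset_of_closure_inter_subset hU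
      ⟨T, hT0, hmemU hT0 (nonneg_of_mulVec_nonneg (hNZ T) hw hTw fun i => (hNz hT0 i).le)⟩ ?_
    rintro t ⟨htU, ht⟩
    exact hmemU ht fun i => closure_minimal (fun s hs => (hs i).le)
      (isClosed_le continuous_const ((continuous_apply i).comp hz)) htU
  obtain ⟨i⟩ := ‹Nonempty n›
  have hw_nonpos : 0 ≤ -w i :=
    nonneg_of_mulVec_nonneg (hNZ 0) (hsub self_mem_Ici) (hNz le_rfl) (y := -w)
      (fun i => by simpa [N, neg_mulVec, mulVec_neg] using hAw i) i
  linarith [hw i]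

theorem exists_nonneg_isRoot_charpoly_of_signed_mulVec_nonneg [Nonempty n] {M : Matrix n n ℝ}
    {σ : n → ℝ} (hσ : ∀ i, σ i * σ i = 1) (hM : ∀ i j, i ≠ j → 0 ≤ σ i * M i j * σ j)
    {u : n → ℝ} (hu : ∀ i, 0 < σ i * u i) (hMu : ∀ i, 0 ≤ σ i * (M *ᵥ u) i) :
    ∃ t, 0 ≤ t ∧ M.charpoly.IsRoot t := by
  set S := diagonal σ
  have hS : S * S = 1 := by
    simp only [S, diagonal_mul_diagonal, hσ, diagonal_one]
  have hchar : (S * M * S).charpoly = M.charpoly := by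
    rw [charpoly_mul_comm, ← Matrix.mul_assoc, hS, Matrix.one_mul]
  rw [← hchar]
  refine exists_nonneg_isRoot_charpoly_of_mulVec_nonneg (w := S *ᵥ u) (fun i j hij => ?_)
    (fun i => ?_) (fun i => ?_)
  · simpa [S, diagonal_mul, mul_diagonal] using hM i j hij
  · simpa [S, mulVec_diagonal] using hu i
  · rw [mulVec_mulVec, Matrix.mul_assoc, hS, Matrix.mul_one, ← mulVec_mulVec]
    simpa [S, mulVec_diagonal] using hMu i

end Matrix

theorem HurwitzStable.not_isRoot_charpoly {n : ℕ} {M : Matrix (Fin n) (Fin n) ℝ}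
    (hM : HurwitzStable M) {t : ℝ} (ht : 0 ≤ t) : ¬ M.charpoly.IsRoot t := fun hroot => by
  have := hM (algebraMap ℝ ℂ t) (by
    rw [aeval_algebraMap_apply_eq_algebraMap_eval, hroot.eq_zero, map_zero])
  simp only [Complex.coe_algebraMap, Complex.ofReal_re] at this
  linarith

theorem FeasibleStable.det_pos {n : ℕ} {a : Fin n → ℝ} {B : Matrix (Fin n) (Fin n) ℝ}
    (h : FeasibleStable a B) : 0 < B.det := by
  obtain ⟨hx, hM⟩ := h
  have h0 := (charpoly_monic _).eval_pos_of_forall_nonneg_not_isRoot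
    (fun _ ht => hM.not_isRoot_charpoly ht) le_rfl
  rw [eval_charpoly, map_zero, zero_sub, neg_neg, det_mul, det_diagonal] at h0
  exact pos_of_mul_pos_right h0 (Finset.prod_pos fun i _ => hx i).le

section Competitor

variable {n : ℕ} {B : Matrix (Fin (n + 2)) (Fin (n + 2)) ℝ}

theorem exists_nonneg_isRoot_charpoly_neg_diagonal_mul {x : Fin (n + 2) → ℝ}
    (hx : ∀ i, 0 < x i) (hB0j : ∀ j, j ≠ 0 → 0 ≤ B 0 j) (hBj0 : ∀ j, j ≠ 0 → 0 ≤ B j 0)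
    (hBjk : ∀ j k, j ≠ 0 → k ≠ 0 → j ≠ k → B j k ≤ 0) {u : Fin (n + 2) → ℝ}
    (hu0 : u 0 < 0) (hu : ∀ k : Fin (n + 1), 0 < u k.succ) (hBu0 : 0 ≤ (B *ᵥ u) 0)
    (hBu : ∀ k : Fin (n + 1), (B *ᵥ u) k.succ ≤ 0) :
    ∃ t, 0 ≤ t ∧ (-(diagonal x * B)).charpoly.IsRoot t := by
  set σ : Fin (n + 2) → ℝ := Fin.cons (-1) fun _ => 1
  refine exists_nonneg_isRoot_charpoly_of_signed_mulVec_nonneg (σ := σ) (u := u)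
    (fun i => ?_) (fun i j hij => ?_) (fun i => ?_) (fun i => ?_)
  · cases i using Fin.cases <;> simp [σ]
  · cases i using Fin.cases with
    | zero =>
      cases j using Fin.cases with
      | zero => exact absurd rfl hij
      | succ l => simpa [σ] using mul_nonneg (hx 0).le (hB0j _ l.succ_ne_zero)
    | succ k =>
      cases j using Fin.cases with
      | zero => simpa [σ] using mul_nonneg (hx _).le (hBj0 _ k.succ_ne_zero)
      | succ l =>
        simpa [σ] using mul_nonpos_of_nonneg_of_nonpos (hx _).le
          (hBjk _ _ k.succ_ne_zero l.succ_ne_zero hij)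
  · cases i using Fin.cases <;> simp [σ, hu0, hu]
  · rw [neg_mulVec, ← mulVec_mulVec, Pi.neg_apply, mulVec_diagonal]
    cases i using Fin.cases with
    | zero => simpa [σ] using mul_nonneg (hx 0).le hBu0
    | succ k => simpa [σ] using mul_nonpos_of_nonneg_of_nonpos (hx _).le (hBu k)

theorem not_feasibleStable_of_competitor_mutualists {a : Fin (n + 2) → ℝ}
    (ha : ∀ j, j ≠ 0 → a j ≤ 0) (hB0j : ∀ j, j ≠ 0 → 0 < B 0 j)
    (hBj0 : ∀ j, j ≠ 0 → 0 ≤ B j 0) (hBjk : ∀ j k, j ≠ 0 → k ≠ 0 → j ≠ k → B j k ≤ 0) :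
    ¬ FeasibleStable a B := by
  intro hfs
  have hdet := hfs.det_pos
  obtain ⟨hx, hM⟩ := hfs
  set x := B.adjugate *ᵥ a
  set R : Fin (n + 2) → ℝ := fun i => ∑ k : Fin (n + 1), B i k.succ * x k.succ
  have hBx (i : Fin (n + 2)) : B i 0 * x 0 + R i = B.det * a i := by
    have := congrFun (show B *ᵥ x = B.det • a by
      rw [mulVec_mulVec, mul_adjugate, smul_mulVec, one_mulVec]) i
    rwa [mulVec, dotProduct, Fin.sum_univ_succ] at this
  have hR0 : 0 < R 0 :=
    Finset.sum_pos (fun k _ => mul_pos (hB0j _ k.succ_ne_zero) (hx _)) Finset.univ_nonempty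
  obtain ⟨ε, hε, hεB⟩ := exists_pos_mul_lt hR0 (B 0 0)
  set u : Fin (n + 2) → ℝ := Fin.cons (-ε) fun k => x k.succ
  have hBu (i : Fin (n + 2)) : (B *ᵥ u) i = R i - B i 0 * ε := by
    rw [mulVec, dotProduct, Fin.sum_univ_succ]
    simp only [u, Fin.cons_zero, Fin.cons_succ, R]
    ring
  have hBu_succ (k : Fin (n + 1)) : (B *ᵥ u) k.succ ≤ 0 := by
    have hdeta : B.det * a k.succ ≤ 0 :=
      mul_nonpos_of_nonneg_of_nonpos hdet.le (ha _ k.succ_ne_zero)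
    have := hBx k.succ
    rw [hBu]
    nlinarith [hBj0 _ k.succ_ne_zero, hx 0]
  obtain ⟨t, ht, hroot⟩ := exists_nonneg_isRoot_charpoly_neg_diagonal_mul hx
    (fun j hj => (hB0j j hj).le) hBj0 hBjk (u := u) (by simpa [u] using hε)
    (fun k => by simpa [u] using hx k.succ) (by rw [hBu]; linarith) hBu_succ
  exact hM.not_isRoot_charpoly ht hroot

end Competitor

/-- **Impossible four-species ecology:** one growing species (species `0`, 0-based)
competing with three dying species that are pairwise obligate mutualists. -/
theorem competitor_with_three_mutualists_impossible :
    ¬ ∃ (a : Fin 4 → ℝ) (B : Matrix (Fin 4) (Fin 4) ℝ),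
      0 < a 0 ∧ a 1 < 0 ∧ a 2 < 0 ∧ a 3 < 0 ∧
      (∀ i, 0 < B i i) ∧
      (∀ j : Fin 4, j ≠ 0 → 0 < B 0 j ∧ 0 < B j 0) ∧
      (∀ j k : Fin 4, j ≠ 0 → k ≠ 0 → j ≠ k → B j k < 0) ∧
      FeasibleStable a B := by
  rintro ⟨a, B, -, ha1, ha2, ha3, -, hcomp, hmut, hfs⟩
  have ha (j : Fin 4) (hj : j ≠ 0) : a j ≤ 0 := by
    fin_cases j
    exacts [absurd rfl hj, ha1.le, ha2.le, ha3.le]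
  exact not_feasibleStable_of_competitor_mutualists (n := 2) ha (fun j hj => (hcomp j hj).1)
    (fun j hj => (hcomp j hj).2.le) (fun j k hj hk hjk => (hmut j k hj hk hjk).le) hfs
end
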